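/- arXiv:1703.03321 — 5 statements merged into one kernel-verified Lean document; each statement's English description precedes it below -/
import Mathlib

section
/- Let U ⊆ ℝ^m be open, ψ : U → ℝ be C¹, and F(A) = ψ(P₁(A), …, P_m(A)) on Ω = {A : (P₁(A),…,P_m(A)) ∈ U}. Then for every A ∈ Ω and every n×n real matrix B, dF(A)B = Σ_{l=1}^m l · ∂_lψ(P₁(A),…,P_m(A)) · trace(A^{l−1} B) = trace(F'(A) ∘ B), where F'(A) = Σ_{l=1}^m l · ∂_lψ(P₁(A),…,P_m(A)) · A^{l−1}. -/
/-
The derivative of `X ↦ X ^ k` at `A` is `B ↦ ∑ i < k, A ^ i * B * A ^ (k - 1 - i)`, and by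
cyclicity of the trace all `k` terms have trace `trace (A ^ (k - 1) * B)`. Hence
`d P_k(A) B = k * trace (A ^ (k - 1) * B)`, and the chain rule through `ψ`, which is
differentiable at `P(A)` because `U` is open, gives both formulas.
-/

attribute [local instance] Matrix.normedAddCommGroup Matrix.normedSpace

/-- `P_k(A) = trace (A ^ k)`, bundled as the vector `(P₁(A), …, P_m(A))`. -/
noncomputable def Pvec (n m : ℕ) (A : Matrix (Fin n) (Fin n) ℝ) : Fin m → ℝ :=
  fun l => (A ^ ((l : ℕ) + 1)).trace

/-- `F'(A) = ∑_{l=1}^m l ∂ψ/∂P_l (P₁(A),…,P_m(A)) A^{l-1}`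
(the index `l : Fin m` represents the integer `l + 1 ∈ {1, …, m}`). -/
noncomputable def Fprime (n m : ℕ) (ψ : (Fin m → ℝ) → ℝ) (A : Matrix (Fin n) (Fin n) ℝ) :
    Matrix (Fin n) (Fin n) ℝ :=
  ∑ l : Fin m,
    (((l : ℕ) + 1 : ℝ) * fderiv ℝ ψ (Pvec n m A) (Pi.single l 1)) • A ^ (l : ℕ)

open Finset

section

/- The sup-norm structure induces the product topology and uniformity on matrices only up to
unfolding. Removing the product instances keeps the continuous linear maps below over the normed
structure that `HasFDerivAt` uses, so that `simp` can rewrite their applications. -/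
attribute [-instance] instTopologicalSpaceMatrix Matrix.instUniformSpace

namespace Matrix

variable {𝕜 ι : Type*} [NontriviallyNormedField 𝕜] [Fintype ι]

lemma trace_pow_mul_mul_pow [DecidableEq ι] (A B : Matrix ι ι 𝕜) (i j : ℕ) :
    (A ^ i * (B * A ^ j)).trace = (A ^ (i + j) * B).trace := by
  rw [← mul_assoc, trace_mul_comm, ← mul_assoc, ← pow_add, add_comm]

variable [CompleteSpace 𝕜]

noncomputable def mulCLM : Matrix ι ι 𝕜 →L[𝕜] Matrix ι ι 𝕜 →L[𝕜] Matrix ι ι 𝕜 :=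
  (LinearMap.mul 𝕜 (Matrix ι ι 𝕜)).toContinuousBilinearMap

@[simp] lemma mulCLM_apply (X Y : Matrix ι ι 𝕜) : mulCLM X Y = X * Y := rfl

noncomputable def traceCLM : Matrix ι ι 𝕜 →L[𝕜] 𝕜 :=
  LinearMap.toContinuousLinearMap (traceLinearMap ι 𝕜 𝕜)

@[simp] lemma traceCLM_apply (X : Matrix ι ι 𝕜) : traceCLM X = X.trace := rfl

variable [DecidableEq ι]

theorem hasFDerivAt_pow (A : Matrix ι ι 𝕜) (k : ℕ) :
    HasFDerivAt (fun X : Matrix ι ι 𝕜 => X ^ k)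
      (∑ i ∈ range k, mulCLM (A ^ i) ∘L mulCLM.flip (A ^ (k - 1 - i))) A := by
  induction k with
  | zero => simpa using hasFDerivAt_const (1 : Matrix ι ι 𝕜) A
  | succ k ih =>
    simp_rw [pow_succ']
    refine (mulCLM.hasFDerivAt.clm_apply ih).congr_fderiv ?_
    ext1 B
    simp only [_root_.add_apply, ContinuousLinearMap.comp_apply, _root_.sum_apply,
      ContinuousLinearMap.flip_apply, mulCLM_apply, map_sum, add_tsub_cancel_right,
      sum_range_succ' _ k, pow_zero, tsub_zero, one_mul, add_left_inj]
    refine sum_congr rfl fun i _ => ?_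
    rw [pow_succ', mul_assoc, Nat.sub_sub, Nat.add_comm 1 i]

theorem hasFDerivAt_trace_pow_succ (A : Matrix ι ι 𝕜) (k : ℕ) :
    HasFDerivAt (fun X : Matrix ι ι 𝕜 => (X ^ (k + 1)).trace)
      (((k : 𝕜) + 1) • traceCLM ∘L mulCLM (A ^ k)) A := by
  refine (traceCLM.hasFDerivAt.comp A (hasFDerivAt_pow A (k + 1))).congr_fderiv ?_
  ext1 B
  simp only [add_tsub_cancel_right, ContinuousLinearMap.comp_apply, _root_.sum_apply,
    ContinuousLinearMap.flip_apply, mulCLM_apply, map_sum, traceCLM_apply, trace_pow_mul_mul_pow,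
    _root_.smul_apply, smul_eq_mul]
  rw [sum_congr rfl fun i hi => by rw [Nat.add_sub_cancel' (Nat.le_of_lt_succ (mem_range.1 hi))],
    sum_const, card_range, nsmul_eq_mul, Nat.cast_succ]

end Matrix

theorem hasFDerivAt_Pvec (n m : ℕ) (A : Matrix (Fin n) (Fin n) ℝ) :
    HasFDerivAt (Pvec n m)
      (ContinuousLinearMap.pi fun l : Fin m =>
        (((l : ℕ) : ℝ) + 1) • Matrix.traceCLM ∘L Matrix.mulCLM (A ^ (l : ℕ))) A :=
  hasFDerivAt_pi.2 fun l => Matrix.hasFDerivAt_trace_pow_succ A l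

theorem fderiv_comp_Pvec_apply (n m : ℕ) (ψ : (Fin m → ℝ) → ℝ) (A B : Matrix (Fin n) (Fin n) ℝ)
    (hψ : DifferentiableAt ℝ ψ (Pvec n m A)) :
    fderiv ℝ (fun X => ψ (Pvec n m X)) A B = ∑ l : Fin m,
      ((l : ℕ) + 1 : ℝ) * fderiv ℝ ψ (Pvec n m A) (Pi.single l 1) * (A ^ (l : ℕ) * B).trace := by
  have hF : HasFDerivAt (fun X => ψ (Pvec n m X)) _ A :=
    hψ.hasFDerivAt.comp A (hasFDerivAt_Pvec n m A)
  rw [hF.fderiv, ContinuousLinearMap.comp_apply, pi_eq_sum_univ' (ContinuousLinearMap.pi _ B)]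
  simp only [ContinuousLinearMap.coe_pi', smul_apply, ContinuousLinearMap.comp_apply,
    Matrix.mulCLM_apply, Matrix.traceCLM_apply, smul_eq_mul, map_sum, map_smul]
  exact sum_congr rfl fun l _ => mul_right_comm _ _ _

end

lemma trace_Fprime_mul (n m : ℕ) (ψ : (Fin m → ℝ) → ℝ) (A B : Matrix (Fin n) (Fin n) ℝ) :
    (Fprime n m ψ A * B).trace = ∑ l : Fin m,
      ((l : ℕ) + 1 : ℝ) * fderiv ℝ ψ (Pvec n m A) (Pi.single l 1) * (A ^ (l : ℕ) * B).trace := by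
  simp only [Fprime, sum_mul, Matrix.trace_sum, Matrix.smul_mul, Matrix.trace_smul, smul_eq_mul]

/-- For `ψ : U → ℝ` of class `C¹` on the open set `U ⊆ ℝ^m` and the
associated operator function `F(A) = ψ (P₁(A), …, P_m(A))` on `Ω = {A | Pvec A ∈ U}`,
the Fréchet derivative at `A ∈ Ω` in direction `B` is
`dF(A)B = ∑_{l=1}^m l ∂_lψ(P(A)) trace (A^{l-1} B) = trace (F'(A) * B)`. -/
theorem stmt_3 (n m : ℕ) (U : Set (Fin m → ℝ)) (hU : IsOpen U)
    (ψ : (Fin m → ℝ) → ℝ) (hψ : ContDiffOn ℝ 1 ψ U)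
    (A : Matrix (Fin n) (Fin n) ℝ) (hA : Pvec n m A ∈ U) :
    ∀ B : Matrix (Fin n) (Fin n) ℝ,
      fderiv ℝ (fun X : Matrix (Fin n) (Fin n) ℝ => ψ (Pvec n m X)) A B
          = ∑ l : Fin m,
              ((l : ℕ) + 1 : ℝ) * fderiv ℝ ψ (Pvec n m A) (Pi.single l 1)
                * (A ^ (l : ℕ) * B).trace ∧
      fderiv ℝ (fun X : Matrix (Fin n) (Fin n) ℝ => ψ (Pvec n m X)) A B
          = (Fprime n m ψ A * B).trace := by
  intro B
  have hψA : DifferentiableAt ℝ ψ (Pvec n m A) :=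
    (hψ.differentiableOn one_ne_zero).differentiableAt (hU.mem_nhds hA)
  have hF := fderiv_comp_Pvec_apply n m ψ A B hψA
  exact ⟨hF, hF.trans (trace_Fprime_mul n m ψ A B).symm⟩
end

section
/- Let U ⊆ ℝ^m be open, ψ : U → ℝ be C¹, f(κ) = ψ(p₁(κ), …, p_m(κ)) for κ with (p₁(κ),…,p_m(κ)) ∈ U, and for an n×n real matrix A with (P₁(A),…,P_m(A)) ∈ U set F'(A) = Σ_{l=1}^m l · ∂_lψ(P₁(A),…,P_m(A)) · A^{l−1}. If A is diagonalisable with S⁻¹AS = diag(κ₁,…,κₙ), then S⁻¹F'(A)S = diag(∂f/∂κ₁(κ), …, ∂f/∂κₙ(κ)); in particular F'(A) and A are simultaneously diagonalisable and the eigenvalue of F'(A) on the i-th eigenvector of A is ∂f/∂κᵢ(κ). -/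
/-!
Conjugation by `S` sends `A ^ l` to `diagonal κ ^ l` and preserves traces, so `P(A) = p(κ)` and
`S⁻¹ F'(A) S` is diagonal with `i`-th entry `∑ₗ l ∂ₗψ(p(κ)) κᵢ^(l-1)`. Since
`∂pₗ/∂κᵢ = l κᵢ^(l-1)`, the chain rule gives the same expression for `∂f/∂κᵢ`.
-/

attribute [local instance] Matrix.normedAddCommGroup Matrix.normedSpace

/-- `p_k(κ) = ∑ i, κ i ^ k`, bundled as the vector `(p₁(κ), …, p_m(κ))`. -/
def pvec (n m : ℕ) (κ : Fin n → ℝ) : Fin m → ℝ :=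
  fun l => ∑ i, κ i ^ ((l : ℕ) + 1)

namespace Matrix

variable {ι R : Type*} [Fintype ι] [DecidableEq ι] [CommRing R]

theorem conj_pow' {S : Matrix ι ι R} (hS : IsUnit S) (A : Matrix ι ι R) (k : ℕ) :
    S⁻¹ * A ^ k * S = (S⁻¹ * A * S) ^ k := by
  rw [← hS.unit_spec, ← coe_units_inv, Units.conj_pow']

theorem conj_sum_smul_pow {S : Matrix ι ι R} (hS : IsUnit S) {m : ℕ} (c : Fin m → R)
    (A : Matrix ι ι R) :
    S⁻¹ * (∑ l : Fin m, c l • A ^ (l : ℕ)) * S = ∑ l : Fin m, c l • (S⁻¹ * A * S) ^ (l : ℕ) := by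
  simp only [Matrix.mul_sum, Matrix.sum_mul, Matrix.mul_smul, Matrix.smul_mul, conj_pow' hS]

theorem sum_smul_diagonal_pow {m : ℕ} (c : Fin m → R) (κ : ι → R) :
    ∑ l : Fin m, c l • diagonal κ ^ (l : ℕ)
      = diagonal fun i => ∑ l : Fin m, c l * κ i ^ (l : ℕ) := by
  ext i j
  rcases eq_or_ne i j with rfl | hij
  · simp [Matrix.sum_apply, diagonal_pow]
  · simp [Matrix.sum_apply, diagonal_pow, hij]

end Matrix

theorem LinearMap.apply_eq_sum_smul_single {ι R M : Type*} [Fintype ι] [DecidableEq ι]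
    [Semiring R] [AddCommMonoid M] [Module R M] (L : (ι → R) →ₗ[R] M) (v : ι → R) :
    L v = ∑ i, v i • L (Pi.single i 1) := by
  conv_lhs => rw [← Finset.univ_sum_single v]
  simp only [map_sum, ← map_smul, ← Pi.single_smul', smul_eq_mul, mul_one]

open Matrix in
theorem Pvec_eq_pvec_of_conj_eq_diagonal {n m : ℕ} {A S : Matrix (Fin n) (Fin n) ℝ}
    {κ : Fin n → ℝ} (hS : IsUnit S) (h : S⁻¹ * A * S = diagonal κ) :
    Pvec n m A = pvec n m κ := by
  funext l
  rw [Pvec, ← trace_conj' hS, conj_pow' hS, h, diagonal_pow, trace_diagonal]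
  rfl

open ContinuousLinearMap in
theorem hasFDerivAt_pvec (n m : ℕ) (κ : Fin n → ℝ) :
    HasFDerivAt (pvec n m)
      (pi fun l : Fin m => ∑ j : Fin n, (((l : ℕ) + 1 : ℝ) * κ j ^ (l : ℕ)) • (proj j : (Fin n → ℝ) →L[ℝ] ℝ)) κ := by
  refine hasFDerivAt_pi'' fun l => ?_
  rw [proj_pi]
  refine HasFDerivAt.fun_sum fun j _ => ?_
  simpa [Function.comp_def] using
    (hasDerivAt_pow ((l : ℕ) + 1) (κ j)).comp_hasFDerivAt κ (hasFDerivAt_apply (𝕜 := ℝ) j κ)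

theorem fderiv_pvec_apply_single (n m : ℕ) (κ : Fin n → ℝ) (i : Fin n) :
    fderiv ℝ (pvec n m) κ (Pi.single i 1)
      = fun l : Fin m => ((l : ℕ) + 1 : ℝ) * κ i ^ (l : ℕ) := by
  funext l
  simp [(hasFDerivAt_pvec n m κ).fderiv, Pi.single_apply]

theorem fderiv_comp_pvec_apply_single {n m : ℕ} {ψ : (Fin m → ℝ) → ℝ} {κ : Fin n → ℝ}
    (hψ : DifferentiableAt ℝ ψ (pvec n m κ)) (i : Fin n) :
    fderiv ℝ (fun x => ψ (pvec n m x)) κ (Pi.single i 1)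
      = ∑ l : Fin m,
          ((l : ℕ) + 1 : ℝ) * κ i ^ (l : ℕ) * fderiv ℝ ψ (pvec n m κ) (Pi.single l 1) := by
  rw [fderiv_fun_comp κ hψ (hasFDerivAt_pvec n m κ).differentiableAt,
    ContinuousLinearMap.comp_apply, fderiv_pvec_apply_single]
  exact (fderiv ℝ ψ (pvec n m κ)).toLinearMap.apply_eq_sum_smul_single _

theorem conj_Fprime_eq_diagonal {n m : ℕ} (ψ : (Fin m → ℝ) → ℝ)
    {A S : Matrix (Fin n) (Fin n) ℝ} {κ : Fin n → ℝ} (hS : IsUnit S)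
    (h : S⁻¹ * A * S = Matrix.diagonal κ) :
    S⁻¹ * Fprime n m ψ A * S = Matrix.diagonal fun i => ∑ l : Fin m,
      ((l : ℕ) + 1 : ℝ) * fderiv ℝ ψ (pvec n m κ) (Pi.single l 1) * κ i ^ (l : ℕ) := by
  rw [Fprime, Pvec_eq_pvec_of_conj_eq_diagonal hS h, Matrix.conj_sum_smul_pow hS, h,
    Matrix.sum_smul_diagonal_pow]

theorem stmt_4_general (n m : ℕ) (U : Set (Fin m → ℝ)) (hU : IsOpen U)
    (ψ : (Fin m → ℝ) → ℝ) (hψ : ContDiffOn ℝ 1 ψ U)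
    (κ : Fin n → ℝ) (hκ : pvec n m κ ∈ U)
    (A : Matrix (Fin n) (Fin n) ℝ)
    (S : Matrix (Fin n) (Fin n) ℝ) (hS : IsUnit S)
    (hdiag : S⁻¹ * A * S = Matrix.diagonal κ) :
    S⁻¹ * Fprime n m ψ A * S
      = Matrix.diagonal (fun i =>
          fderiv ℝ (fun x : Fin n → ℝ => ψ (pvec n m x)) κ (Pi.single i 1)) := by
  have hψκ : DifferentiableAt ℝ ψ (pvec n m κ) :=
    (hψ.contDiffAt (hU.mem_nhds hκ)).differentiableAt one_ne_zero
  rw [conj_Fprime_eq_diagonal ψ hS hdiag]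
  congr 1
  funext i
  rw [fderiv_comp_pvec_apply_single hψκ]
  exact Finset.sum_congr rfl fun l _ => by ring

/-- Let `ψ` be `C¹` on the open `U ⊆ ℝ^m`, `f(κ) = ψ (p₁(κ),…,p_m(κ))`,
and `F'(A) = ∑ l ∂_lψ(P(A)) A^{l-1}`. If `S⁻¹ A S = diagonal κ` then
`S⁻¹ F'(A) S = diagonal (∂f/∂κ₁(κ), …, ∂f/∂κₙ(κ))`; in particular `F'(A)` and `A` are
simultaneously diagonalisable and the eigenvalue of `F'(A)` on the `i`-th eigenvector
of `A` is `∂f/∂κᵢ(κ)`. -/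
theorem stmt_4 (n m : ℕ) (U : Set (Fin m → ℝ)) (hU : IsOpen U)
    (ψ : (Fin m → ℝ) → ℝ) (hψ : ContDiffOn ℝ 1 ψ U)
    (κ : Fin n → ℝ) (hκ : pvec n m κ ∈ U)
    (A : Matrix (Fin n) (Fin n) ℝ) (hA : Pvec n m A ∈ U)
    (S : Matrix (Fin n) (Fin n) ℝ) (hS : IsUnit S)
    (hdiag : S⁻¹ * A * S = Matrix.diagonal κ) :
    S⁻¹ * Fprime n m ψ A * S
      = Matrix.diagonal (fun i =>
          fderiv ℝ (fun x : Fin n → ℝ => ψ (pvec n m x)) κ (Pi.single i 1)) :=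
  stmt_4_general n m U hU ψ hψ κ hκ A S hS hdiag
end

section
/- Let U ⊆ ℝ^m be open, ψ : U → ℝ be C², F(A) = ψ(P₁(A), …, P_m(A)) and f(κ) = ψ(p₁(κ), …, p_m(κ)). Let A = diag(κ₁,…,κₙ) with (P₁(A),…,P_m(A)) ∈ U and with κ₁,…,κₙ pairwise distinct. Then for every n×n real matrix η, d²F(A)(η,η) = Σ_{i,j=1}^n (∂²f/∂κᵢ∂κⱼ)(κ) · η_{ii} η_{jj} + Σ_{i≠j} ((∂f/∂κᵢ(κ) − ∂f/∂κⱼ(κ))/(κᵢ − κⱼ)) · η_{ij} η_{ji}. -/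
attribute [local instance] Matrix.normedAddCommGroup Matrix.normedSpace

/-!
Both sides come from the second-order chain rule
`d²(ψ ∘ Φ)(ξ, ζ) = d²ψ(dΦ ξ, dΦ ζ) + dψ(d²Φ(ξ, ζ))`, applied to `Φ = Pvec` at `A = diagonal κ` and
to `Φ = pvec = Pvec ∘ diagonal` at `κ`. By cyclicity of the trace,
`d tr(X^(k+1)) ζ = (k+1) tr(X^k ζ)` and `d² tr(X^(k+1))(ξ, ζ) = (k+1) ∑_{a+b=k-1} tr(X^a ξ X^b ζ)`.
At a diagonal `A` the first derivative only sees the diagonal of `η`, while the second one pairs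
`η i j` with `η j i` with the weight `(k+1) ∑_{a+b=k-1} κᵢ^a κⱼ^b`: for `i = j` this is
`∂²p_{k+1}/∂κᵢ²`, and for `i ≠ j` it is the divided difference of `∂p_{k+1}/∂κ = (k+1) κ^k`
between `κᵢ` and `κⱼ`, which produces the second sum.
-/

open Finset Matrix Filter Topology

section SecondOrderChainRule

variable {𝕜 E F G : Type*} [NontriviallyNormedField 𝕜]
  [NormedAddCommGroup E] [NormedSpace 𝕜 E] [NormedAddCommGroup F] [NormedSpace 𝕜 F]
  [NormedAddCommGroup G] [NormedSpace 𝕜 G]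

theorem fderiv_fderiv_apply_eq_fderiv_apply {f : E → F} {x : E}
    (hf : DifferentiableAt 𝕜 (fderiv 𝕜 f) x) (ξ ζ : E) :
    fderiv 𝕜 (fderiv 𝕜 f) x ξ ζ = fderiv 𝕜 (fun y => fderiv 𝕜 f y ζ) x ξ := by
  rw [fderiv_clm_apply hf (differentiableAt_const ζ)]
  simp

theorem fderiv_fderiv_comp_apply {ψ : F → G} {Φ : E → F} {x : E}
    (hψ : ContDiffAt 𝕜 2 ψ (Φ x)) (hΦ : ContDiffAt 𝕜 2 Φ x) (ξ ζ : E) :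
    fderiv 𝕜 (fderiv 𝕜 (ψ ∘ Φ)) x ξ ζ =
      fderiv 𝕜 (fderiv 𝕜 ψ) (Φ x) (fderiv 𝕜 Φ x ξ) (fderiv 𝕜 Φ x ζ) +
        fderiv 𝕜 ψ (Φ x) (fderiv 𝕜 (fderiv 𝕜 Φ) x ξ ζ) := by
  have hev : fderiv 𝕜 (ψ ∘ Φ) =ᶠ[𝓝 x] fun y => (fderiv 𝕜 ψ (Φ y)).comp (fderiv 𝕜 Φ y) := by
    filter_upwards [hΦ.continuousAt.eventually (hψ.eventually (by simp)), hΦ.eventually (by simp)]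
      with y hψy hΦy
    exact fderiv_comp y (hψy.differentiableAt two_ne_zero) (hΦy.differentiableAt two_ne_zero)
  have hψ' := ((hψ.fderiv_right (m := 1) le_rfl).differentiableAt one_ne_zero).hasFDerivAt
  have hΦ' := ((hΦ.fderiv_right (m := 1) le_rfl).differentiableAt one_ne_zero).hasFDerivAt
  have hcomp : HasFDerivAt (fun y => (fderiv 𝕜 ψ (Φ y)).comp (fderiv 𝕜 Φ y)) _ x :=
    (hψ'.comp x (hΦ.differentiableAt two_ne_zero).hasFDerivAt).clm_comp hΦ'
  rw [hev.fderiv_eq, hcomp.fderiv]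
  simp [add_comm]

theorem fderiv_comp_clm_apply {f : F → G} (L : E →L[𝕜] F) {x : E}
    (hf : DifferentiableAt 𝕜 f (L x)) (v : E) :
    fderiv 𝕜 (f ∘ L) x v = fderiv 𝕜 f (L x) (L v) := by
  rw [fderiv_comp x hf L.differentiableAt, L.fderiv]
  rfl

theorem fderiv_fderiv_comp_clm_apply {f : F → G} (L : E →L[𝕜] F) {x : E}
    (hf : ContDiffAt 𝕜 2 f (L x)) (ξ ζ : E) :
    fderiv 𝕜 (fderiv 𝕜 (f ∘ L)) x ξ ζ = fderiv 𝕜 (fderiv 𝕜 f) (L x) (L ξ) (L ζ) := by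
  have hL : fderiv 𝕜 L = fun _ => L := funext fun _ => L.fderiv
  rw [fderiv_fderiv_comp_apply hf L.contDiff.contDiffAt, hL, fderiv_fun_const]
  simp

end SecondOrderChainRule

section MatrixCalculus

variable {𝕜 ι : Type*} [NontriviallyNormedField 𝕜] [CompleteSpace 𝕜] [Fintype ι]

noncomputable def matrixTraceCLM : Matrix ι ι 𝕜 →L[𝕜] 𝕜 :=
  LinearMap.toContinuousLinearMap (traceLinearMap ι 𝕜 𝕜)

variable [DecidableEq ι]

noncomputable def matrixMulCLM : Matrix ι ι 𝕜 →L[𝕜] Matrix ι ι 𝕜 →L[𝕜] Matrix ι ι 𝕜 :=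
  (LinearMap.mul 𝕜 (Matrix ι ι 𝕜)).toContinuousBilinearMap

noncomputable def matrixDiagonalCLM : (ι → 𝕜) →L[𝕜] Matrix ι ι 𝕜 :=
  LinearMap.toContinuousLinearMap (diagonalLinearMap ι 𝕜 𝕜)

@[simp] lemma matrixDiagonalCLM_apply (d : ι → 𝕜) : matrixDiagonalCLM d = diagonal d := rfl

noncomputable def matrixPowDeriv (k : ℕ) (X : Matrix ι ι 𝕜) : Matrix ι ι 𝕜 →L[𝕜] Matrix ι ι 𝕜 :=
  ∑ a ∈ range k, (matrixMulCLM (X ^ a)).comp (matrixMulCLM.flip (X ^ (k - 1 - a)))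

lemma matrixPowDeriv_apply (k : ℕ) (X ξ : Matrix ι ι 𝕜) :
    matrixPowDeriv k X ξ = ∑ a ∈ range k, X ^ a * ξ * X ^ (k - 1 - a) := by
  simp only [matrixPowDeriv, FunLike.coe_sum, Finset.sum_apply]
  exact sum_congr rfl fun a _ => (mul_assoc _ _ _).symm

theorem hasFDerivAt_matrix_pow (k : ℕ) (X : Matrix ι ι 𝕜) :
    HasFDerivAt (fun Y : Matrix ι ι 𝕜 => Y ^ k) (matrixPowDeriv k X) X := by
  induction k with
  | zero => simpa [matrixPowDeriv] using hasFDerivAt_const (1 : Matrix ι ι 𝕜) X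
  | succ k ih =>
    simp only [pow_succ]
    refine (matrixMulCLM.hasFDerivAt_of_bilinear ih (hasFDerivAt_id X)).congr_fderiv ?_
    ext1 ξ
    change X ^ k * ξ + matrixPowDeriv k X ξ * X = matrixPowDeriv (k + 1) X ξ
    rw [matrixPowDeriv_apply, matrixPowDeriv_apply, add_comm, sum_range_succ, sum_mul]
    congr 1
    · refine sum_congr rfl fun a ha => ?_
      rw [mul_assoc, ← pow_succ, Nat.add_sub_cancel]
      congr 2
      have := mem_range.1 ha
      omega
    · simp

theorem contDiff_matrix_pow {N : WithTop ℕ∞} (k : ℕ) :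
    ContDiff 𝕜 N fun Y : Matrix ι ι 𝕜 => Y ^ k := by
  induction k with
  | zero => simpa using contDiff_const
  | succ k ih =>
    simp only [pow_succ]
    exact matrixMulCLM.isBoundedBilinearMap.contDiff.comp (ih.prodMk contDiff_id)

theorem hasFDerivAt_trace_matrix_pow_succ (k : ℕ) (X : Matrix ι ι 𝕜) :
    HasFDerivAt (fun Y : Matrix ι ι 𝕜 => trace (Y ^ (k + 1)))
      (((k : 𝕜) + 1) • matrixTraceCLM.comp (matrixMulCLM (X ^ k))) X := by
  refine (matrixTraceCLM.hasFDerivAt.comp X (hasFDerivAt_matrix_pow (k + 1) X)).congr_fderiv ?_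
  ext1 ξ
  change trace (matrixPowDeriv (k + 1) X ξ) = ((k : 𝕜) + 1) * trace (X ^ k * ξ)
  have hcycle : ∀ a ∈ range (k + 1), trace (X ^ a * ξ * X ^ (k + 1 - 1 - a)) = trace (X ^ k * ξ) :=
    fun a ha => by
      rw [trace_mul_cycle, ← pow_add, Nat.add_sub_cancel,
        Nat.sub_add_cancel (Nat.lt_succ_iff.1 (mem_range.1 ha))]
  rw [matrixPowDeriv_apply, trace_sum, sum_congr rfl hcycle, sum_const, card_range, nsmul_eq_mul]
  push_cast
  ring

theorem trace_diagonal_mul_mul_diagonal_mul {R : Type*} [CommSemiring R] (d e : ι → R)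
    (ξ ζ : Matrix ι ι R) :
    trace (diagonal d * ξ * diagonal e * ζ) = ∑ i, ∑ j, d i * ξ i j * e j * ζ j i := by
  simp only [trace, diag_apply, mul_apply (M := diagonal d * ξ * diagonal e), mul_diagonal,
    diagonal_mul]

end MatrixCalculus

theorem bilin_sum_add_sum_eq_diag_add_offDiag {ι V : Type*} [Fintype ι] [DecidableEq ι]
    [NormedAddCommGroup V] [NormedSpace ℝ V] (Q : V →L[ℝ] V →L[ℝ] ℝ) (L : V →L[ℝ] ℝ)
    (g : ι → V) (c : ι → ι → V) (d : ι → ι → ℝ) (hd : ∀ i j, i ≠ j → L (c i j) = d i j) (η : Matrix ι ι ℝ) :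
    Q (∑ i, η i i • g i) (∑ j, η j j • g j) + L (∑ i, ∑ j, (η i j * η j i) • c i j) =
      (∑ i, ∑ j, (Q (g i) (g j) + L (if i = j then c i i else 0)) * η i i * η j j) +
        ∑ i, ∑ j, if i = j then 0 else d i j * η i j * η j i := by
  have hQ : Q (∑ i, η i i • g i) (∑ j, η j j • g j) =
      ∑ i, ∑ j, η i i * η j j * Q (g i) (g j) := by
    simp only [map_sum, map_smul, FunLike.coe_sum, Finset.sum_apply, FunLike.coe_smul,
      Pi.smul_apply, smul_eq_mul, mul_sum]
    rw [sum_comm]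
    exact sum_congr rfl fun i _ => sum_congr rfl fun j _ => by ring
  rw [hQ]
  simp only [map_sum, map_smul, smul_eq_mul, ← sum_add_distrib]
  refine sum_congr rfl fun i _ => sum_congr rfl fun j _ => ?_
  by_cases hij : i = j
  · subst hij
    simp only [↓reduceIte, add_zero]
    ring
  · simp only [hd i j hij, hij, ↓reduceIte, map_zero, add_zero]
    ring

section PowerSums

variable {n m : ℕ}

theorem Pvec_diagonal (κ : Fin n → ℝ) : Pvec n m (diagonal κ) = pvec n m κ := by
  funext l
  simp [Pvec, pvec, diagonal_pow, trace_diagonal]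

theorem contDiff_Pvec {N : WithTop ℕ∞} : ContDiff ℝ N (Pvec n m) :=
  contDiff_pi.2 fun l =>
    (matrixTraceCLM (𝕜 := ℝ) (ι := Fin n)).contDiff.comp (contDiff_matrix_pow ((l : ℕ) + 1))

theorem fderiv_Pvec_apply (X ζ : Matrix (Fin n) (Fin n) ℝ) :
    fderiv ℝ (Pvec n m) X ζ = fun l : Fin m => (((l : ℕ) : ℝ) + 1) * trace (X ^ (l : ℕ) * ζ) := by
  have h : HasFDerivAt (Pvec n m) (ContinuousLinearMap.pi fun l : Fin m =>
      (((l : ℕ) : ℝ) + 1) • matrixTraceCLM.comp (matrixMulCLM (X ^ (l : ℕ)))) X :=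
    hasFDerivAt_pi.2 fun l => hasFDerivAt_trace_matrix_pow_succ (l : ℕ) X
  rw [h.fderiv]
  rfl

theorem fderiv_fderiv_Pvec_apply (X ξ ζ : Matrix (Fin n) (Fin n) ℝ) :
    fderiv ℝ (fderiv ℝ (Pvec n m)) X ξ ζ = fun l : Fin m =>
      (((l : ℕ) : ℝ) + 1) * ∑ a ∈ range l, trace (X ^ a * ξ * X ^ ((l : ℕ) - 1 - a) * ζ) := by
  have hd : DifferentiableAt ℝ (fderiv ℝ (Pvec n m)) X :=
    ((contDiff_Pvec (N := 2)).fderiv_right (m := 1) le_rfl).differentiable one_ne_zero X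
  have hline : (fun Y => fderiv ℝ (Pvec n m) Y ζ) =
      fun Y (l : Fin m) => (((l : ℕ) : ℝ) + 1) * trace (Y ^ (l : ℕ) * ζ) :=
    funext (fderiv_Pvec_apply · ζ)
  have h : HasFDerivAt (fun Y (l : Fin m) => (((l : ℕ) : ℝ) + 1) * trace (Y ^ (l : ℕ) * ζ))
      (ContinuousLinearMap.pi fun l : Fin m => (((l : ℕ) : ℝ) + 1) •
        (matrixTraceCLM.comp (matrixMulCLM.flip ζ)).comp (matrixPowDeriv (l : ℕ) X)) X :=
    hasFDerivAt_pi.2 fun l =>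
      ((matrixTraceCLM.comp (matrixMulCLM.flip ζ)).hasFDerivAt.comp X
        (hasFDerivAt_matrix_pow (l : ℕ) X)).const_mul _
  -- The general lemmas see matrices through the normed-space instances, so `rw` cannot match
  -- their output against plain `fderiv` terms on matrices; `calc` steps unify up to defeq.
  calc fderiv ℝ (fderiv ℝ (Pvec n m)) X ξ ζ
      = fderiv ℝ (fun Y (l : Fin m) => (((l : ℕ) : ℝ) + 1) * trace (Y ^ (l : ℕ) * ζ)) X ξ := by
        rw [← hline]
        exact fderiv_fderiv_apply_eq_fderiv_apply hd ξ ζ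
    _ = _ := by
        rw [h.fderiv]
        funext l
        change (((l : ℕ) : ℝ) + 1) * trace (matrixPowDeriv (l : ℕ) X ξ * ζ) = _
        rw [matrixPowDeriv_apply, sum_mul, trace_sum]

variable (m) in
def powerSumGrad (κ : Fin n → ℝ) (i : Fin n) : Fin m → ℝ :=
  fun l => (((l : ℕ) : ℝ) + 1) * κ i ^ (l : ℕ)

-- Written as a geometric sum so that for `i = j` it is `∂²p_{l+1}/∂κᵢ²`; see `powerSumDivDiff_eq`.
variable (m) in
def powerSumDivDiff (κ : Fin n → ℝ) (i j : Fin n) : Fin m → ℝ :=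
  fun l => (((l : ℕ) : ℝ) + 1) * ∑ a ∈ range l, κ i ^ a * κ j ^ ((l : ℕ) - 1 - a)

theorem powerSumDivDiff_eq {κ : Fin n → ℝ} {i j : Fin n} (hij : κ i ≠ κ j) :
    powerSumDivDiff m κ i j = (κ i - κ j)⁻¹ • (powerSumGrad m κ i - powerSumGrad m κ j) := by
  funext l
  simp only [powerSumDivDiff, powerSumGrad, Pi.smul_apply, Pi.sub_apply, smul_eq_mul]
  rw [eq_inv_mul_iff_mul_eq₀ (sub_ne_zero.2 hij)]
  linear_combination (((l : ℕ) : ℝ) + 1) * geom_sum₂_mul (κ i) (κ j) l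

theorem fderiv_Pvec_diagonal (κ : Fin n → ℝ) (ζ : Matrix (Fin n) (Fin n) ℝ) :
    fderiv ℝ (Pvec n m) (diagonal κ) ζ = ∑ i, ζ i i • powerSumGrad m κ i := by
  rw [fderiv_Pvec_apply]
  funext l
  simp only [trace, diagonal_pow, diag_apply, diagonal_mul, Pi.pow_apply, mul_sum,
    Finset.sum_apply, Pi.smul_apply, powerSumGrad, smul_eq_mul]
  exact sum_congr rfl fun i _ => by ring

theorem fderiv_fderiv_Pvec_diagonal (κ : Fin n → ℝ) (ξ ζ : Matrix (Fin n) (Fin n) ℝ) :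
    fderiv ℝ (fderiv ℝ (Pvec n m)) (diagonal κ) ξ ζ =
      ∑ i, ∑ j, (ξ i j * ζ j i) • powerSumDivDiff m κ i j := by
  rw [fderiv_fderiv_Pvec_apply]
  funext l
  simp only [diagonal_pow, trace_diagonal_mul_mul_diagonal_mul, powerSumDivDiff, Finset.sum_apply,
    Pi.smul_apply, smul_eq_mul, Pi.pow_apply, mul_sum]
  rw [sum_comm]
  refine sum_congr rfl fun i _ => ?_
  rw [sum_comm]
  exact sum_congr rfl fun j _ => sum_congr rfl fun a _ => by ring

end PowerSums

section DiagonalHessian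

variable {n m : ℕ} {ψ : (Fin m → ℝ) → ℝ} {κ : Fin n → ℝ}

theorem comp_pvec_eq_comp_Pvec_comp_diagonal :
    (fun x => ψ (pvec n m x)) = (fun X => ψ (Pvec n m X)) ∘ matrixDiagonalCLM := by
  funext x
  simp [Pvec_diagonal]

theorem ContDiffAt.comp_Pvec_diagonal (hψ : ContDiffAt ℝ 2 ψ (pvec n m κ)) :
    ContDiffAt ℝ 2 (fun X => ψ (Pvec n m X)) (diagonal κ) :=
  ContDiffAt.comp (g := ψ) _ (Pvec_diagonal (m := m) κ ▸ hψ) contDiff_Pvec.contDiffAt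

theorem fderiv_comp_Pvec_diagonal (hψ : DifferentiableAt ℝ ψ (pvec n m κ))
    (ζ : Matrix (Fin n) (Fin n) ℝ) :
    fderiv ℝ (fun X => ψ (Pvec n m X)) (diagonal κ) ζ =
      fderiv ℝ ψ (pvec n m κ) (∑ i, ζ i i • powerSumGrad m κ i) := by
  rw [← Pvec_diagonal] at hψ ⊢
  calc fderiv ℝ (fun X => ψ (Pvec n m X)) (diagonal κ) ζ
      = fderiv ℝ ψ (Pvec n m (diagonal κ)) (fderiv ℝ (Pvec n m) (diagonal κ) ζ) :=
        congrArg (· ζ) (fderiv_comp _ hψ ((contDiff_Pvec (N := 1)).differentiable one_ne_zero _))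
    _ = _ := by rw [fderiv_Pvec_diagonal]

theorem fderiv_fderiv_comp_Pvec_diagonal (hψ : ContDiffAt ℝ 2 ψ (pvec n m κ))
    (ξ ζ : Matrix (Fin n) (Fin n) ℝ) :
    fderiv ℝ (fderiv ℝ (fun X => ψ (Pvec n m X))) (diagonal κ) ξ ζ =
      fderiv ℝ (fderiv ℝ ψ) (pvec n m κ) (∑ i, ξ i i • powerSumGrad m κ i)
          (∑ j, ζ j j • powerSumGrad m κ j) +
        fderiv ℝ ψ (pvec n m κ) (∑ i, ∑ j, (ξ i j * ζ j i) • powerSumDivDiff m κ i j) := by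
  rw [← Pvec_diagonal] at hψ ⊢
  calc fderiv ℝ (fderiv ℝ (fun X => ψ (Pvec n m X))) (diagonal κ) ξ ζ
      = fderiv ℝ (fderiv ℝ ψ) (Pvec n m (diagonal κ)) (fderiv ℝ (Pvec n m) (diagonal κ) ξ)
            (fderiv ℝ (Pvec n m) (diagonal κ) ζ) +
          fderiv ℝ ψ (Pvec n m (diagonal κ)) (fderiv ℝ (fderiv ℝ (Pvec n m)) (diagonal κ) ξ ζ) :=
        fderiv_fderiv_comp_apply hψ contDiff_Pvec.contDiffAt ξ ζ
    _ = _ := by rw [fderiv_Pvec_diagonal, fderiv_Pvec_diagonal, fderiv_fderiv_Pvec_diagonal]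

theorem fderiv_comp_pvec_single (hψ : ContDiffAt ℝ 2 ψ (pvec n m κ)) (i : Fin n) :
    fderiv ℝ (fun x => ψ (pvec n m x)) κ (Pi.single i 1) =
      fderiv ℝ ψ (pvec n m κ) (powerSumGrad m κ i) := by
  calc fderiv ℝ (fun x => ψ (pvec n m x)) κ (Pi.single i 1)
      = fderiv ℝ (fun X => ψ (Pvec n m X)) (diagonal κ) (diagonal (Pi.single i 1)) := by
        rw [comp_pvec_eq_comp_Pvec_comp_diagonal]
        exact fderiv_comp_clm_apply _ (hψ.comp_Pvec_diagonal.differentiableAt two_ne_zero) _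
    _ = _ := by
        simp [fderiv_comp_Pvec_diagonal (hψ.differentiableAt two_ne_zero), Pi.single_apply]

theorem fderiv_fderiv_comp_pvec_single (hψ : ContDiffAt ℝ 2 ψ (pvec n m κ)) (i j : Fin n) :
    fderiv ℝ (fderiv ℝ (fun x => ψ (pvec n m x))) κ (Pi.single i 1) (Pi.single j 1) =
      fderiv ℝ (fderiv ℝ ψ) (pvec n m κ) (powerSumGrad m κ i) (powerSumGrad m κ j) +
        fderiv ℝ ψ (pvec n m κ) (if i = j then powerSumDivDiff m κ i i else 0) := by
  calc fderiv ℝ (fderiv ℝ (fun x => ψ (pvec n m x))) κ (Pi.single i 1) (Pi.single j 1)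
      = fderiv ℝ (fderiv ℝ (fun X => ψ (Pvec n m X))) (diagonal κ) (diagonal (Pi.single i 1))
          (diagonal (Pi.single j 1)) := by
        rw [comp_pvec_eq_comp_Pvec_comp_diagonal]
        exact fderiv_fderiv_comp_clm_apply _ hψ.comp_Pvec_diagonal _ _
    _ = _ := by
        rcases eq_or_ne i j with rfl | hij
        · simp [fderiv_fderiv_comp_Pvec_diagonal hψ, diagonal_apply, Pi.single_apply]
        · simp [fderiv_fderiv_comp_Pvec_diagonal hψ, diagonal_apply, Pi.single_apply, hij,
            hij.symm]

end DiagonalHessian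

/-- Let `ψ` be `C²` on the open `U ⊆ ℝ^m`, `F(A) = ψ(P₁(A),…,P_m(A))`,
`f(κ) = ψ(p₁(κ),…,p_m(κ))`, and `A = diagonal κ` with `(P₁(A),…,P_m(A)) ∈ U` and the
`κᵢ` pairwise distinct. Then for every matrix `η`,
`d²F(A)(η,η) = ∑_{i,j} ∂²f/∂κᵢ∂κⱼ(κ) ηᵢᵢ ηⱼⱼ
  + ∑_{i≠j} ((∂f/∂κᵢ(κ) - ∂f/∂κⱼ(κ))/(κᵢ - κⱼ)) ηᵢⱼ ηⱼᵢ`. -/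
theorem stmt_7 (n m : ℕ) (U : Set (Fin m → ℝ)) (hU : IsOpen U)
    (ψ : (Fin m → ℝ) → ℝ) (hψ : ContDiffOn ℝ 2 ψ U)
    (κ : Fin n → ℝ) (hκdist : Function.Injective κ)
    (hA : Pvec n m (Matrix.diagonal κ) ∈ U)
    (η : Matrix (Fin n) (Fin n) ℝ) :
    fderiv ℝ (fderiv ℝ (fun X : Matrix (Fin n) (Fin n) ℝ => ψ (Pvec n m X)))
        (Matrix.diagonal κ) η η
      = (∑ i, ∑ j,
          fderiv ℝ (fderiv ℝ (fun x : Fin n → ℝ => ψ (pvec n m x))) κ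
              (Pi.single i 1) (Pi.single j 1) * η i i * η j j)
        + ∑ i, ∑ j,
            if i = j then 0 else
              (fderiv ℝ (fun x : Fin n → ℝ => ψ (pvec n m x)) κ (Pi.single i 1)
                - fderiv ℝ (fun x : Fin n → ℝ => ψ (pvec n m x)) κ (Pi.single j 1))
              / (κ i - κ j) * η i j * η j i := by
  have hψκ : ContDiffAt ℝ 2 ψ (pvec n m κ) :=
    hψ.contDiffAt (hU.mem_nhds (Pvec_diagonal (m := m) κ ▸ hA))
  rw [fderiv_fderiv_comp_Pvec_diagonal hψκ]
  simp only [fderiv_comp_pvec_single hψκ, fderiv_fderiv_comp_pvec_single hψκ]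
  refine bilin_sum_add_sum_eq_diag_add_offDiag _ _ _ _ _ (fun i j hij => ?_) η
  rw [powerSumDivDiff_eq (hκdist.ne hij), map_smul, map_sub, smul_eq_mul, inv_mul_eq_div]
end

section
/- Let Γ ⊆ ℝⁿ be open and convex, f : Γ → ℝ be C², and let i ≠ j be such that f is invariant under swapping the i-th and j-th coordinates. Let κ ∈ Γ with κᵢ ≠ κⱼ, and suppose the segment σ(t) = κ + t·((κⱼ − κᵢ)/2)·(eᵢ − eⱼ), t ∈ [0,1], lies in Γ (which holds automatically when Γ is invariant under this coordinate swap). Then (∂f/∂κᵢ(κ) − ∂f/∂κⱼ(κ))/(κᵢ − κⱼ) = (1/2) ∫₀¹ (∂²f/∂κᵢ² − 2 ∂²f/∂κᵢ∂κⱼ + ∂²f/∂κⱼ²)(σ(t)) dt. -/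
/-!
Put `v = eᵢ - eⱼ` and `c = (κⱼ - κᵢ)/2`, so that `σ(t) = κ + t c v`. The endpoint `σ(1)` has
equal `i`-th and `j`-th coordinates, hence is fixed by the swap, while the swap sends `v` to `-v`;
differentiating the invariance `f ∘ swap = f` at `σ(1)` gives `Df(σ(1)) v = 0`. The fundamental
theorem of calculus along `σ` then yields `-Df(κ) v = c ∫₀¹ D²f(σ(t)) v v`, and by the symmetry of
`D²f` the integrand is `∂ᵢᵢf - 2 ∂ᵢⱼf + ∂ⱼⱼf`. Dividing by `κᵢ - κⱼ = -2c` gives the claim.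
-/

open Set Filter Topology

section Calculus

variable {𝕜 E F : Type*} [NontriviallyNormedField 𝕜] [NormedAddCommGroup E] [NormedSpace 𝕜 E]
  [NormedAddCommGroup F] [NormedSpace 𝕜 F]

theorem fderiv_apply_map_eq_of_comp_eventuallyEq {f : E → F} {x : E} (L : E →L[𝕜] E)
    (hf : DifferentiableAt 𝕜 f x) (hLx : L x = x) (hinv : f ∘ L =ᶠ[𝓝 x] f) (v : E) :
    fderiv 𝕜 f x (L v) = fderiv 𝕜 f x v := by
  have hfL : HasFDerivAt f (fderiv 𝕜 f x) (L x) := by rw [hLx]; exact hf.hasFDerivAt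
  have hcomp : HasFDerivAt (f ∘ L) ((fderiv 𝕜 f x).comp L) x := hfL.comp x L.hasFDerivAt
  rw [← ContinuousLinearMap.comp_apply,
    (hcomp.congr_of_eventuallyEq hinv.symm).unique hf.hasFDerivAt]

theorem IsSymmSndFDerivAt.fderiv_fderiv_sub_sub {f : E → F} {x : E}
    (h : IsSymmSndFDerivAt 𝕜 f x) (u w : E) :
    fderiv 𝕜 (fderiv 𝕜 f) x (u - w) (u - w) =
      fderiv 𝕜 (fderiv 𝕜 f) x u u - 2 • fderiv 𝕜 (fderiv 𝕜 f) x u w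
        + fderiv 𝕜 (fderiv 𝕜 f) x w w := by
  simp only [map_sub, sub_apply, h w u, two_smul]
  abel

end Calculus

section Line

variable {E F : Type*} [NormedAddCommGroup E] [NormedSpace ℝ E]
  [NormedAddCommGroup F] [NormedSpace ℝ F] [CompleteSpace F]

theorem fderiv_add_apply_sub_eq_integral {f : E → F} {U : Set E} (hU : IsOpen U)
    (hf : ContDiffOn ℝ 2 f U) {x v : E} (hseg : ∀ t ∈ Icc (0 : ℝ) 1, x + t • v ∈ U) (w : E) :
    fderiv ℝ f (x + v) w - fderiv ℝ f x w =
      ∫ t in (0 : ℝ)..1, fderiv ℝ (fderiv ℝ f) (x + t • v) v w := by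
  have hf' : ContDiffOn ℝ 1 (fderiv ℝ f) U := hf.fderiv_of_isOpen hU (by norm_num)
  have hderiv : ∀ t ∈ uIcc (0 : ℝ) 1, HasDerivAt (fun t : ℝ => fderiv ℝ f (x + t • v) w)
      (fderiv ℝ (fderiv ℝ f) (x + t • v) v w) t := by
    intro t ht
    rw [uIcc_of_le zero_le_one] at ht
    have hline : HasDerivAt (fun t : ℝ => x + t • v) v t := by
      simpa using ((hasDerivAt_id t).smul_const v).const_add x
    have hD : DifferentiableAt ℝ (fderiv ℝ f) (x + t • v) :=
      (hf'.differentiableOn one_ne_zero).differentiableAt (hU.mem_nhds (hseg t ht))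
    have hc : HasDerivAt (fun t : ℝ => fderiv ℝ f (x + t • v))
        (fderiv ℝ (fderiv ℝ f) (x + t • v) v) t :=
      hD.hasFDerivAt.comp_hasDerivAt t hline
    simpa using hc.clm_apply (hasDerivAt_const t w)
  have hcont : ContinuousOn (fun t : ℝ => fderiv ℝ (fderiv ℝ f) (x + t • v) v w) (uIcc 0 1) := by
    rw [uIcc_of_le zero_le_one]
    exact (((hf'.continuousOn_fderiv_of_isOpen hU le_rfl).comp (by fun_prop) hseg).clm_apply
      continuousOn_const).clm_apply continuousOn_const
  rw [intervalIntegral.integral_eq_sub_of_hasDerivAt hderiv hcont.intervalIntegrable]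
  simp

end Line

theorem comp_swap_eq_self {ι α : Type*} [DecidableEq ι] {x : ι → α} {i j : ι} (h : x i = x j) :
    x ∘ Equiv.swap i j = x := by
  ext k
  simp only [Function.comp_apply, Equiv.swap_apply_def]
  split_ifs <;> simp_all

theorem single_sub_single_comp_swap {ι R : Type*} [DecidableEq ι] [Ring R] (i j : ι) :
    (Pi.single i 1 - Pi.single j 1 : ι → R) ∘ Equiv.swap i j = -(Pi.single i 1 - Pi.single j 1) := by
  ext k
  simp only [Function.comp_apply, Pi.sub_apply, Pi.neg_apply, Pi.single_apply, Equiv.swap_apply_def]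
  split_ifs <;> simp_all

theorem fderiv_single_sub_single_eq_zero_of_swap_invariant {ι F : Type*} [Fintype ι] [DecidableEq ι]
    [NormedAddCommGroup F] [NormedSpace ℝ F] {f : (ι → ℝ) → F} {x : ι → ℝ} {i j : ι}
    (hf : DifferentiableAt ℝ f x) (hx : x i = x j)
    (hinv : ∀ᶠ y in 𝓝 x, f (y ∘ Equiv.swap i j) = f y) :
    fderiv ℝ f x (Pi.single i 1 - Pi.single j 1) = 0 := by
  let L := (LinearMap.funLeft ℝ ℝ (Equiv.swap i j)).toContinuousLinearMap
  have hL : ∀ y, L y = y ∘ Equiv.swap i j := fun _ => rfl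
  have := fderiv_apply_map_eq_of_comp_eventuallyEq L hf (by rw [hL, comp_swap_eq_self hx]) hinv
    (Pi.single i 1 - Pi.single j 1)
  rw [hL, single_sub_single_comp_swap, map_neg, neg_eq_iff_eq_neg, eq_neg_iff_add_eq_zero,
    ← two_smul ℝ, smul_eq_zero] at this
  exact this.resolve_left two_ne_zero

theorem stmt_8_general (n : ℕ) (Γ : Set (Fin n → ℝ)) (hΓopen : IsOpen Γ)
    (f : (Fin n → ℝ) → ℝ) (hf : ContDiffOn ℝ 2 f Γ)
    (i j : Fin n) (hij : i ≠ j)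
    (hsym : ∀ x ∈ Γ, f (x ∘ Equiv.swap i j) = f x)
    (κ : Fin n → ℝ) (hne : κ i ≠ κ j)
    (hseg : ∀ t ∈ Set.Icc (0 : ℝ) 1,
      κ + (t * ((κ j - κ i) / 2)) • (Pi.single i 1 - Pi.single j 1) ∈ Γ) :
    (fderiv ℝ f κ (Pi.single i 1) - fderiv ℝ f κ (Pi.single j 1)) / (κ i - κ j)
      = (1 / 2) * ∫ t in (0 : ℝ)..1,
          (fderiv ℝ (fderiv ℝ f)
              (κ + (t * ((κ j - κ i) / 2)) • (Pi.single i 1 - Pi.single j 1))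
              (Pi.single i 1) (Pi.single i 1)
            - 2 * fderiv ℝ (fderiv ℝ f)
              (κ + (t * ((κ j - κ i) / 2)) • (Pi.single i 1 - Pi.single j 1))
              (Pi.single i 1) (Pi.single j 1)
            + fderiv ℝ (fderiv ℝ f)
              (κ + (t * ((κ j - κ i) / 2)) • (Pi.single i 1 - Pi.single j 1))
              (Pi.single j 1) (Pi.single j 1)) := by
  set v : Fin n → ℝ := Pi.single i 1 - Pi.single j 1 with hv
  set c : ℝ := (κ j - κ i) / 2 with hc
  simp_rw [mul_smul] at hseg ⊢
  have hmid : (κ + c • v) i = (κ + c • v) j := by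
    simp only [hv, Pi.add_apply, Pi.smul_apply, Pi.sub_apply, Pi.single_eq_same,
      Pi.single_eq_of_ne hij, Pi.single_eq_of_ne hij.symm, smul_eq_mul]
    ring
  have hend : fderiv ℝ f (κ + c • v) v = 0 := by
    have hU : Γ ∈ 𝓝 (κ + c • v) := hΓopen.mem_nhds (by simpa using hseg 1 (by simp))
    exact fderiv_single_sub_single_eq_zero_of_swap_invariant
      ((hf.contDiffAt hU).differentiableAt two_ne_zero) hmid (eventually_of_mem hU hsym)
  have hexpand : ∀ t ∈ uIcc (0 : ℝ) 1, fderiv ℝ (fderiv ℝ f) (κ + t • c • v) (c • v) v =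
      c * (fderiv ℝ (fderiv ℝ f) (κ + t • c • v) (Pi.single i 1) (Pi.single i 1)
        - 2 * fderiv ℝ (fderiv ℝ f) (κ + t • c • v) (Pi.single i 1) (Pi.single j 1)
        + fderiv ℝ (fderiv ℝ f) (κ + t • c • v) (Pi.single j 1) (Pi.single j 1)) := by
    intro t ht
    rw [uIcc_of_le zero_le_one] at ht
    have hsymm := (hf.contDiffAt (hΓopen.mem_nhds (hseg t ht))).isSymmSndFDerivAt (by simp)
    rw [map_smul, smul_apply, smul_eq_mul, hsymm.fderiv_fderiv_sub_sub,
      nsmul_eq_mul, Nat.cast_ofNat]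
  have hftc := fderiv_add_apply_sub_eq_integral hΓopen hf hseg v
  rw [hend, zero_sub, intervalIntegral.integral_congr hexpand,
    intervalIntegral.integral_const_mul] at hftc
  have hden : κ i - κ j = -2 * c := by rw [hc]; ring
  have hc0 : c ≠ 0 := div_ne_zero (sub_ne_zero.2 hne.symm) two_ne_zero
  rw [← map_sub, hden, ← neg_neg (fderiv ℝ f κ v), hftc]
  field_simp

/-- Let `Γ ⊆ ℝⁿ` be open and convex, `f` of class `C²` on `Γ`, and
`i ≠ j` such that `f` is invariant on `Γ` under swapping the `i`-th and `j`-th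
coordinates. If `κ ∈ Γ`, `κ i ≠ κ j` and the segment
`σ(t) = κ + t ((κⱼ - κᵢ)/2)(eᵢ - eⱼ)`, `t ∈ [0,1]`, lies in `Γ`, then
`(∂f/∂κᵢ(κ) - ∂f/∂κⱼ(κ))/(κᵢ - κⱼ)
   = (1/2) ∫₀¹ (∂²f/∂κᵢ² - 2 ∂²f/∂κᵢ∂κⱼ + ∂²f/∂κⱼ²)(σ(t)) dt`. -/
theorem stmt_8 (n : ℕ) (Γ : Set (Fin n → ℝ)) (hΓopen : IsOpen Γ) (hΓconv : Convex ℝ Γ)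
    (f : (Fin n → ℝ) → ℝ) (hf : ContDiffOn ℝ 2 f Γ)
    (i j : Fin n) (hij : i ≠ j)
    (hsym : ∀ x ∈ Γ, f (x ∘ Equiv.swap i j) = f x)
    (κ : Fin n → ℝ) (hκ : κ ∈ Γ) (hne : κ i ≠ κ j)
    (hseg : ∀ t ∈ Set.Icc (0 : ℝ) 1,
      κ + (t * ((κ j - κ i) / 2)) • (Pi.single i 1 - Pi.single j 1) ∈ Γ) :
    (fderiv ℝ f κ (Pi.single i 1) - fderiv ℝ f κ (Pi.single j 1)) / (κ i - κ j)
      = (1 / 2) * ∫ t in (0 : ℝ)..1,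
          (fderiv ℝ (fderiv ℝ f)
              (κ + (t * ((κ j - κ i) / 2)) • (Pi.single i 1 - Pi.single j 1))
              (Pi.single i 1) (Pi.single i 1)
            - 2 * fderiv ℝ (fderiv ℝ f)
              (κ + (t * ((κ j - κ i) / 2)) • (Pi.single i 1 - Pi.single j 1))
              (Pi.single i 1) (Pi.single j 1)
            + fderiv ℝ (fderiv ℝ f)
              (κ + (t * ((κ j - κ i) / 2)) • (Pi.single i 1 - Pi.single j 1))
              (Pi.single j 1) (Pi.single j 1)) :=
  stmt_8_general n Γ hΓopen f hf i j hij hsym κ hne hseg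
end

section
/- The function F on the space of 2×2 real matrices defined by F(A) = |trace(A²)|^{3/2} is NOT twice continuously differentiable (F is not C²). In particular, its restriction to the line x ↦ [[0, x],[1, 0]], which equals x ↦ |2x|^{3/2}, fails to be C² at x = 0, even though F agrees with the C² function f(κ₁,κ₂) = (κ₁² + κ₂²)^{3/2} of the eigenvalues on all ℝ-diagonalisable 2×2 matrices. -/
/-!
On the line `x ↦ !![0, x; 1, 0]` the trace of the square is `2x`, so `F` restricts to
`x ↦ |2x|^{3/2}`. For `1 < p < 2` the derivative of `|x|^p` is `p |x|^{p-2} x`, whose difference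
quotients at `0` are `p |x|^{p-2} → ∞`; hence `|x|^p` is not `C²` at `0`, and neither is `F`.
On a diagonalisable matrix the trace of the square is conjugation invariant, which gives the
agreement with `(κ₁² + κ₂²)^{3/2}`.
-/

attribute [local instance] Matrix.normedAddCommGroup Matrix.normedSpace

open Filter Topology

theorem ContDiffAt.differentiableAt_deriv {f : ℝ → ℝ} {x : ℝ} {n : WithTop ℕ∞}
    (h : ContDiffAt ℝ n f x) (hn : 1 + 1 ≤ n) : DifferentiableAt ℝ (deriv f) x :=
  ((h.fderiv_right hn).clm_apply contDiffAt_const).differentiableAt one_ne_zero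

theorem not_contDiffAt_two_abs_rpow {p : ℝ} (hp₁ : 1 < p) (hp₂ : p < 2) :
    ¬ ContDiffAt ℝ 2 (fun x : ℝ => |x| ^ p) 0 := by
  intro h
  have hderiv : deriv (fun x : ℝ => |x| ^ p) = fun x => p * |x| ^ (p - 2) * x :=
    funext fun x => (hasDerivAt_abs_rpow x hp₁).deriv
  have hslope :=
    hasDerivAt_iff_tendsto_slope.1 (hderiv ▸ h.differentiableAt_deriv le_rfl).hasDerivAt
  have htop : Tendsto (fun y : ℝ => p * |y| ^ (p - 2)) (𝓝[≠] 0) atTop :=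
    ((tendsto_rpow_neg_nhdsGT_zero (by linarith)).comp tendsto_abs_nhdsNE_zero).const_mul_atTop
      (by linarith)
  refine not_tendsto_nhds_of_tendsto_atTop htop _ (hslope.congr' ?_)
  filter_upwards [self_mem_nhdsWithin] with y (hy : y ≠ 0)
  simp [slope_def_field, hy]

theorem not_contDiffAt_two_abs_const_mul_rpow {c p : ℝ} (hc : c ≠ 0) (hp₁ : 1 < p)
    (hp₂ : p < 2) :
    ¬ ContDiffAt ℝ 2 (fun x : ℝ => |c * x| ^ p) 0 := by
  intro h
  refine not_contDiffAt_two_abs_rpow hp₁ hp₂ ?_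
  have hscale : ContDiffAt ℝ 2 (fun x : ℝ => c⁻¹ * x) 0 := contDiffAt_const.mul contDiffAt_id
  simpa [Function.comp_def, hc] using ContDiffAt.comp (g := fun x => |c * x| ^ p) 0
    (by simpa using h) hscale

namespace Matrix

theorem trace_pow_eq_sum_of_conj_diagonal {n R : Type*} [Fintype n] [DecidableEq n] [CommRing R]
    {A S : Matrix n n R} {κ : n → R} (hS : IsUnit S) (h : S⁻¹ * A * S = diagonal κ)
    (k : ℕ) :
    (A ^ k).trace = ∑ i, κ i ^ k := by
  have hconj : (S⁻¹ * A * S) ^ k = S⁻¹ * A ^ k * S := by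
    simpa [coe_units_inv] using Units.conj_pow' hS.unit A k
  rw [← trace_conj' hS, ← hconj, h, diagonal_pow, trace_diagonal]
  rfl

theorem trace_sq_antidiagonal {R : Type*} [CommRing R] (x y : R) :
    ((!![0, x; y, 0] : Matrix (Fin 2) (Fin 2) R) ^ 2).trace = 2 * x * y := by
  simp [sq, trace_fin_two]
  ring

end Matrix

theorem contDiff_antidiagonal_line :
    ContDiff ℝ ⊤ (fun x : ℝ => (!![0, x; 1, 0] : Matrix (Fin 2) (Fin 2) ℝ)) := by
  refine contDiff_pi.2 fun i => contDiff_pi.2 fun j => ?_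
  fin_cases i <;> fin_cases j <;> simp [contDiff_const, contDiff_fun_id]

/-- The function `F(A) = |trace (A²)|^{3/2}` on `2 × 2` real matrices
is not `C²`. Its restriction to the line `x ↦ [[0, x], [1, 0]]` equals
`x ↦ |2x|^{3/2}`, which fails to be `C²` at `x = 0`; this although `F` agrees with the
`C²` function `f(κ₁,κ₂) = (κ₁² + κ₂²)^{3/2}` of the eigenvalues on all
`ℝ`-diagonalisable `2 × 2` matrices. -/
theorem stmt_19 :
    ¬ ContDiff ℝ 2
        (fun A : Matrix (Fin 2) (Fin 2) ℝ => |(A ^ 2).trace| ^ ((3 : ℝ) / 2)) ∧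
    (∀ x : ℝ,
      |(((!![0, x; 1, 0] : Matrix (Fin 2) (Fin 2) ℝ)) ^ 2).trace| ^ ((3 : ℝ) / 2)
        = |2 * x| ^ ((3 : ℝ) / 2)) ∧
    ¬ ContDiffAt ℝ 2
        (fun x : ℝ =>
          |(((!![0, x; 1, 0] : Matrix (Fin 2) (Fin 2) ℝ)) ^ 2).trace| ^ ((3 : ℝ) / 2))
        0 ∧
    ∀ (A S : Matrix (Fin 2) (Fin 2) ℝ) (κ : Fin 2 → ℝ), IsUnit S →
      S⁻¹ * A * S = Matrix.diagonal κ →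
      |(A ^ 2).trace| ^ ((3 : ℝ) / 2) = ((κ 0) ^ 2 + (κ 1) ^ 2) ^ ((3 : ℝ) / 2) := by
  have hline : ¬ ContDiffAt ℝ 2
      (fun x : ℝ => |((!![0, x; 1, 0] : Matrix (Fin 2) (Fin 2) ℝ) ^ 2).trace| ^ ((3 : ℝ) / 2))
      0 := by
    simpa only [Matrix.trace_sq_antidiagonal, mul_one] using
      not_contDiffAt_two_abs_const_mul_rpow two_ne_zero (by norm_num) (by norm_num)
  refine ⟨fun hF => hline (hF.comp (contDiff_antidiagonal_line.of_le le_top)).contDiffAt,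
    fun x => by rw [Matrix.trace_sq_antidiagonal, mul_one], hline, fun A S κ hS h => ?_⟩
  have htrace : (A ^ 2).trace = κ 0 ^ 2 + κ 1 ^ 2 := by
    rw [Matrix.trace_pow_eq_sum_of_conj_diagonal hS h, Fin.sum_univ_two]
  rw [htrace, abs_of_nonneg (by positivity)]
end
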